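/- Let n, k, j be integers with 0 ≤ j ≤ k − 1, k ≥ 1, and n ≥ 2k + 1. Let X be the set of all k-element subsets of {1,…,n}. For i ∈ {1,…,j} let p_i = n−2i+2 and q_i = n−2i+1, and let b = n−2j. Call x ∈ X compatible if for every i ∈ {1,…,j}, x contains exactly one of p_i, q_i; for compatible x let sgn(x) = (−1)^{#{i : q_i ∈ x}}. Define vectors in ℝ^X by: v(x) = sgn(x)/sqrt(2^j·binom(n−2j, k−j)) if x is compatible, and 0 otherwise; w_∘(x) = sgn(x)/sqrt(2^j·binom(n−2j−1, k−j)) if x is compatible and b ∉ x, and 0 otherwise; w_•(x) = sgn(x)/sqrt(2^j·binom(n−2j−1, k−j−1)) if x is compatible and b ∈ x, and 0 otherwise. Then: (1) w_∘ and w_• are orthonormal (each has Euclidean norm 1 and ⟨w_∘, w_•⟩ = 0); (2) v is a unit vector; and (3) v = sqrt((n−k−j)/(n−2j))·w_∘ + sqrt((k−j)/(n−2j))·w_•. -/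

import Mathlib

open scoped RealInnerProductSpace

/-- The family `X` of all `k`-element subsets of `{1, …, n}`. -/
abbrev SetFamily (n k : ℕ) := {x : Finset ℕ // x ∈ Finset.powersetCard k (Finset.Icc 1 n)}

/-- `x` is compatible if for every `i ∈ {1,…,j}` it contains exactly one of
`p_i = n−2i+2` and `q_i = n−2i+1`. -/
abbrev IsCompatible (n j : ℕ) (x : Finset ℕ) : Prop :=
  ∀ i ∈ Finset.Icc 1 j,
    (n - 2*i + 2 ∈ x ∧ n - 2*i + 1 ∉ x) ∨ (n - 2*i + 1 ∈ x ∧ n - 2*i + 2 ∉ x)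

/-- `sgn(x) = (−1)^{#{i ∈ {1,…,j} : q_i ∈ x}}` where `q_i = n−2i+1`. -/
noncomputable def sgn (n j : ℕ) (x : Finset ℕ) : ℝ :=
  (-1) ^ ((Finset.Icc 1 j).filter (fun i => n - 2*i + 1 ∈ x)).card

/-- The vector `v ∈ ℝ^X`: `v(x) = sgn(x)/sqrt(2^j·C(n−2j, k−j))` if `x` is compatible,
else `0`. -/
noncomputable def vVec (n k j : ℕ) : EuclideanSpace ℝ (SetFamily n k) :=
  (WithLp.equiv 2 _).symm fun x =>
    if IsCompatible n j x.1 then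
      sgn n j x.1 / Real.sqrt (2 ^ j * ((n - 2*j).choose (k - j) : ℝ))
    else 0

/-- The vector `w_∘ ∈ ℝ^X`: `w_∘(x) = sgn(x)/sqrt(2^j·C(n−2j−1, k−j))` if `x` is
compatible and `b = n−2j ∉ x`, else `0`. -/
noncomputable def wOut (n k j : ℕ) : EuclideanSpace ℝ (SetFamily n k) :=
  (WithLp.equiv 2 _).symm fun x =>
    if IsCompatible n j x.1 ∧ n - 2*j ∉ x.1 then
      sgn n j x.1 / Real.sqrt (2 ^ j * ((n - 2*j - 1).choose (k - j) : ℝ))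
    else 0

/-- The vector `w_• ∈ ℝ^X`: `w_•(x) = sgn(x)/sqrt(2^j·C(n−2j−1, k−j−1))` if `x` is
compatible and `b = n−2j ∈ x`, else `0`. -/
noncomputable def wIn (n k j : ℕ) : EuclideanSpace ℝ (SetFamily n k) :=
  (WithLp.equiv 2 _).symm fun x =>
    if IsCompatible n j x.1 ∧ n - 2*j ∈ x.1 then
      sgn n j x.1 / Real.sqrt (2 ^ j * ((n - 2*j - 1).choose (k - j - 1) : ℝ))
    else 0

/-!
Write `m = n - 2j` and `r = k - j`. A compatible set is one element from each pair `{p_i, q_i}`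
together with an `r`-subset of `{1, …, m}`; peeling off the pairs one at a time shows that the
compatible sets whose trace on `{1, …, m}` satisfies a condition are `2^j` times as many as the
`r`-subsets of `{1, …, m}` satisfying it. This makes `w_∘` and `w_•` unit vectors, and they have
disjoint supports. On the support of `w_∘` (resp. `w_•`) the vector `v` is a constant multiple
of it, the square of the constant being a ratio of binomial coefficients, `(m - r) / m`
(resp. `r / m`). As these two squares add up to `1`, Pythagoras gives `‖v‖ = 1`.
-/

open Finset

section PowersetCard

variable {α : Type*} [DecidableEq α]

theorem powersetCard_erase (r : ℕ) (U : Finset α) (a : α) :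
    powersetCard r (U.erase a) = {s ∈ powersetCard r U | a ∉ s} := by
  ext s
  simp only [mem_filter, mem_powersetCard, subset_erase]
  tauto

theorem card_filter_mem_powersetCard_succ {U : Finset α} {a : α} (ha : a ∈ U) (r : ℕ)
    (P : Finset α → Prop) [DecidablePred P] :
    #{s ∈ powersetCard (r + 1) U | a ∈ s ∧ P (s.erase a)} =
      #{t ∈ powersetCard r (U.erase a) | P t} := by
  refine card_nbij' (erase · a) (insert a) ?_ ?_ ?_ ?_
  · intro s hs
    simp only [coe_filter, mem_powersetCard, Set.mem_ofPred_eq] at hs ⊢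
    obtain ⟨⟨hsU, hcard⟩, has, hP⟩ := hs
    exact ⟨⟨erase_subset_erase a hsU, by rw [card_erase_of_mem has, hcard]; rfl⟩, hP⟩
  · intro t ht
    simp only [coe_filter, mem_powersetCard, Set.mem_ofPred_eq] at ht ⊢
    obtain ⟨⟨htU, hcard⟩, hP⟩ := ht
    have hat : a ∉ t := fun h => notMem_erase a U (htU h)
    refine ⟨⟨insert_subset ha (htU.trans (erase_subset a U)), ?_⟩, mem_insert_self a t, ?_⟩
    · rw [card_insert_of_notMem hat, hcard]
    · rwa [erase_insert hat]
  · intro s hs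
    exact insert_erase (mem_filter.mp hs).2.1
  · intro t ht
    exact erase_insert fun h => notMem_erase a U ((mem_powersetCard.mp (mem_filter.mp ht).1).1 h)

theorem card_filter_xor_powersetCard_succ {U : Finset α} {a b : α} (ha : a ∈ U) (hb : b ∈ U)
    (hab : a ≠ b) (r : ℕ) (P : Finset α → Prop) [DecidablePred P] :
    #{s ∈ powersetCard (r + 1) U | Xor (a ∈ s) (b ∈ s) ∧ P ((s.erase a).erase b)} =
      2 * #{t ∈ powersetCard r ((U.erase a).erase b) | P t} := by
  have one_side : ∀ a b, a ∈ U → a ≠ b →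
      #{s ∈ powersetCard (r + 1) U | (a ∈ s ∧ b ∉ s) ∧ P ((s.erase a).erase b)} =
        #{t ∈ powersetCard r ((U.erase a).erase b) | P t} := by
    intro a b ha hab
    have hb_erase : ∀ s : Finset α, b ∉ s.erase a ↔ b ∉ s := fun s => by
      rw [mem_erase]
      exact ⟨fun h hbs => h ⟨hab.symm, hbs⟩, fun h h' => h h'.2⟩
    calc #{s ∈ powersetCard (r + 1) U | (a ∈ s ∧ b ∉ s) ∧ P ((s.erase a).erase b)}
        = #{s ∈ powersetCard (r + 1) U | a ∈ s ∧ b ∉ s.erase a ∧ P ((s.erase a).erase b)} := by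
          simp only [hb_erase, and_assoc]
      _ = #{t ∈ powersetCard r (U.erase a) | b ∉ t ∧ P (t.erase b)} :=
          card_filter_mem_powersetCard_succ ha r fun t => b ∉ t ∧ P (t.erase b)
      _ = #{t ∈ powersetCard r ((U.erase a).erase b) | P t} := by
          rw [powersetCard_erase r (U.erase a) b, filter_filter]
          congr 1
          exact filter_congr fun t _ => and_congr_right fun hbt => by rw [erase_eq_of_notMem hbt]
  have hsplit : {s ∈ powersetCard (r + 1) U | Xor (a ∈ s) (b ∈ s) ∧ P ((s.erase a).erase b)} =
      {s ∈ powersetCard (r + 1) U | (a ∈ s ∧ b ∉ s) ∧ P ((s.erase a).erase b)} ∪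
        {s ∈ powersetCard (r + 1) U | (b ∈ s ∧ a ∉ s) ∧ P ((s.erase b).erase a)} := by
    ext s
    simp only [mem_filter, mem_union]
    rw [erase_right_comm (s := s) (a := b)]
    unfold Xor
    tauto
  rw [hsplit, card_union_of_disjoint, one_side a b ha hab, one_side b a hb hab.symm,
    erase_right_comm]
  · ring
  · exact disjoint_filter.mpr fun s _ h h' => h.1.2 h'.1.1

end PowersetCard

theorem isCompatible_succ (n j : ℕ) (x : Finset ℕ) :
    IsCompatible n (j + 1) x ↔
      IsCompatible n j x ∧ Xor (n - 2 * (j + 1) + 2 ∈ x) (n - 2 * (j + 1) + 1 ∈ x) := by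
  rw [IsCompatible, ← insert_Icc_right_eq_Icc_add_one (by omega), forall_mem_insert, and_comm]
  rfl

theorem card_filter_isCompatible (n k j : ℕ) (hjn : 2 * j ≤ n) (hjk : j ≤ k)
    (P : Finset ℕ → Prop) [DecidablePred P] :
    #{x ∈ powersetCard k (Icc 1 n) | IsCompatible n j x ∧ P (x ∩ Icc 1 (n - 2 * j))} =
      2 ^ j * #{s ∈ powersetCard (k - j) (Icc 1 (n - 2 * j)) | P s} := by
  induction j generalizing P with
  | zero =>
    simp only [Nat.mul_zero, Nat.sub_zero, pow_zero, one_mul]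
    congr 1
    refine filter_congr fun x hx => ?_
    rw [inter_eq_left.mpr (mem_powersetCard.mp hx).1]
    exact and_iff_right fun i hi => absurd (mem_Icc.mp hi) (by omega)
  | succ j ih =>
    obtain ⟨m, hm⟩ : ∃ m, n - 2 * j = m + 2 := ⟨n - 2 * j - 2, by omega⟩
    have hIcc : ((Icc 1 (m + 2)).erase (m + 2)).erase (m + 1) = Icc 1 m := by
      ext a
      simp only [mem_erase, mem_Icc]
      omega
    -- `p_{j+1} = m + 2` and `q_{j+1} = m + 1` are the top two elements of `{1, …, m + 2}`, so the
    -- extra compatibility condition is a condition on the trace `x ∩ Icc 1 (m + 2)`.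
    have hstep : ∀ x : Finset ℕ,
        IsCompatible n (j + 1) x ∧ P (x ∩ Icc 1 (n - 2 * (j + 1))) ↔
          IsCompatible n j x ∧ Xor (m + 2 ∈ x ∩ Icc 1 (m + 2)) (m + 1 ∈ x ∩ Icc 1 (m + 2)) ∧
            P (((x ∩ Icc 1 (m + 2)).erase (m + 2)).erase (m + 1)) := by
      intro x
      have hmem : ∀ a, 1 ≤ a → a ≤ m + 2 → (a ∈ x ∩ Icc 1 (m + 2) ↔ a ∈ x) := fun a h1 h2 => by
        simp [mem_inter, mem_Icc, h1, h2]
      rw [isCompatible_succ, show n - 2 * (j + 1) = m by omega, hmem _ (by omega) le_rfl,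
        hmem _ (by omega) (by omega), ← inter_erase, ← inter_erase, hIcc, and_assoc]
    calc #{x ∈ powersetCard k (Icc 1 n) |
            IsCompatible n (j + 1) x ∧ P (x ∩ Icc 1 (n - 2 * (j + 1)))}
        = #{x ∈ powersetCard k (Icc 1 n) | IsCompatible n j x ∧
            Xor (m + 2 ∈ x ∩ Icc 1 (m + 2)) (m + 1 ∈ x ∩ Icc 1 (m + 2)) ∧
              P (((x ∩ Icc 1 (m + 2)).erase (m + 2)).erase (m + 1))} := by
          congr 1
          exact filter_congr fun x _ => hstep x
      _ = 2 ^ j * #{s ∈ powersetCard (k - (j + 1) + 1) (Icc 1 (m + 2)) |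
            Xor (m + 2 ∈ s) (m + 1 ∈ s) ∧ P ((s.erase (m + 2)).erase (m + 1))} := by
          have h := ih (by omega) (by omega)
            fun s => Xor (m + 2 ∈ s) (m + 1 ∈ s) ∧ P ((s.erase (m + 2)).erase (m + 1))
          rwa [hm, show k - j = k - (j + 1) + 1 by omega] at h
      _ = 2 ^ (j + 1) * #{s ∈ powersetCard (k - (j + 1)) (Icc 1 (n - 2 * (j + 1))) | P s} := by
          rw [card_filter_xor_powersetCard_succ (by simp) (by simp) (by omega), hIcc,
            show n - 2 * (j + 1) = m by omega, pow_succ]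
          ring

theorem card_filter_isCompatible_notMem (n k j : ℕ) (hjk : j ≤ k) (hjn : 2 * j < n) :
    #{x ∈ powersetCard k (Icc 1 n) | IsCompatible n j x ∧ n - 2 * j ∉ x} =
      2 ^ j * (n - 2 * j - 1).choose (k - j) := by
  have hb : n - 2 * j ∈ Icc 1 (n - 2 * j) := mem_Icc.mpr ⟨by omega, le_rfl⟩
  have h := card_filter_isCompatible n k j hjn.le hjk (n - 2 * j ∉ ·)
  simp only [mem_inter, hb, and_true] at h
  rw [h, ← powersetCard_erase, card_powersetCard, card_erase_of_mem hb, Nat.card_Icc,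
    Nat.add_sub_cancel]

theorem card_filter_isCompatible_mem (n k j : ℕ) (hjk : j < k) (hjn : 2 * j < n) :
    #{x ∈ powersetCard k (Icc 1 n) | IsCompatible n j x ∧ n - 2 * j ∈ x} =
      2 ^ j * (n - 2 * j - 1).choose (k - j - 1) := by
  have hb : n - 2 * j ∈ Icc 1 (n - 2 * j) := mem_Icc.mpr ⟨by omega, le_rfl⟩
  have h := card_filter_isCompatible n k j hjn.le hjk.le (n - 2 * j ∈ ·)
  simp only [mem_inter, hb, and_true] at h
  simp_rw [h, ← singleton_subset_iff]
  rw [card_filter_powersetCard_subset _ _ _ (singleton_subset_iff.mpr hb)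
    (by rw [card_singleton]; omega),
    card_singleton, Nat.card_Icc, Nat.add_sub_cancel]

theorem card_filter_univ_subtype {α : Type*} (s : Finset α) (q : α → Prop) [DecidablePred q] :
    #{x : {x // x ∈ s} | q x.1} = #{x ∈ s | q x} := by
  rw [univ_eq_attach, filter_attach, card_map, card_attach]

section SignedIndicator

variable {ι : Type*}

noncomputable def signedIndicator (σ : ι → ℝ) (p : ι → Prop) [DecidablePred p] (D : ℝ) :
    EuclideanSpace ℝ ι :=
  WithLp.toLp 2 fun i => if p i then σ i / √D else 0

variable {σ τ : ι → ℝ} {p q r : ι → Prop} [DecidablePred p] [DecidablePred q] [DecidablePred r]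
  {D E F : ℝ}

theorem norm_signedIndicator [Fintype ι] (hσ : ∀ i, p i → σ i ^ 2 = 1)
    (hcard : (#{i | p i} : ℝ) = D) (hD : D ≠ 0) : ‖signedIndicator σ p D‖ = 1 := by
  have hD0 : 0 ≤ D := hcard ▸ Nat.cast_nonneg _
  have hsq : ∀ i, ‖(signedIndicator σ p D) i‖ ^ 2 = if p i then D⁻¹ else 0 := fun i => by
    simp only [signedIndicator, Real.norm_eq_abs, sq_abs]
    split_ifs with hi
    · rw [div_pow, hσ i hi, Real.sq_sqrt hD0, one_div]
    · rw [zero_pow two_ne_zero]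
  rw [EuclideanSpace.norm_eq, Finset.sum_congr rfl fun i _ => hsq i, sum_ite, sum_const,
    sum_const_zero, add_zero, nsmul_eq_mul, hcard, mul_inv_cancel₀ hD, Real.sqrt_one]

theorem inner_signedIndicator_eq_zero [Fintype ι] (hpq : ∀ i, p i → ¬ q i) :
    ⟪signedIndicator σ p D, signedIndicator τ q E⟫ = 0 := by
  refine Finset.sum_eq_zero fun i _ => ?_
  simp only [signedIndicator, RCLike.inner_apply, conj_trivial]
  split_ifs with hq hp <;> first | exact absurd hq (hpq i hp) | ring

theorem signedIndicator_eq_sqrt_smul_add_sqrt_smul (hp : ∀ i, p i ↔ q i ∨ r i)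
    (hqr : ∀ i, q i → ¬ r i) (hE : 0 < E) (hF : 0 < F) :
    signedIndicator σ p D =
      √(E / D) • signedIndicator σ q E + √(F / D) • signedIndicator σ r F := by
  have hscale : ∀ {G : ℝ}, 0 < G → ∀ s : ℝ, √(G / D) * (s / √G) = s / √D := fun hG s => by
    rw [Real.sqrt_div hG.le]
    field_simp [(Real.sqrt_pos.mpr hG).ne']
  ext i
  simp only [signedIndicator, PiLp.add_apply, PiLp.smul_apply, smul_eq_mul]
  by_cases hqi : q i
  · simp [hqi, hqr i hqi, (hp i).mpr (Or.inl hqi), hscale hE]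
  by_cases hri : r i
  · simp [hqi, hri, (hp i).mpr (Or.inr hri), hscale hF]
  · simp [hqi, hri, (hp i).not.mpr (by tauto)]

end SignedIndicator

theorem norm_sqrt_smul_add_sqrt_smul {E : Type*} [NormedAddCommGroup E] [InnerProductSpace ℝ E]
    {u w : E} (hu : ‖u‖ = 1) (hw : ‖w‖ = 1) (huw : ⟪u, w⟫ = 0) {a b : ℝ} (ha : 0 ≤ a)
    (hb : 0 ≤ b) (hab : a + b = 1) : ‖√a • u + √b • w‖ = 1 := by
  have horth : ⟪√a • u, √b • w⟫ = 0 := by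
    rw [inner_smul_left, inner_smul_right, huw, mul_zero, mul_zero]
  have h := norm_add_sq_eq_norm_sq_add_norm_sq_real horth
  rw [norm_smul, norm_smul, hu, hw, Real.norm_of_nonneg (Real.sqrt_nonneg a),
    Real.norm_of_nonneg (Real.sqrt_nonneg b), mul_one, mul_one, Real.mul_self_sqrt ha,
    Real.mul_self_sqrt hb, hab] at h
  nlinarith [norm_nonneg (√a • u + √b • w)]

theorem sgn_sq (n j : ℕ) (x : Finset ℕ) : sgn n j x ^ 2 = 1 := by
  rw [sgn, ← pow_mul, pow_mul', neg_one_sq, one_pow]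

theorem cast_choose_pred_div_cast_choose {m r : ℕ} (hrm : r < m) :
    ((m - 1).choose r : ℝ) / m.choose r = (m - r) / m := by
  obtain ⟨N, rfl⟩ : ∃ N, m = N + 1 := ⟨m - 1, by omega⟩
  have hpos : (0 : ℝ) < (N + 1).choose r := by exact_mod_cast Nat.choose_pos (by omega)
  rw [Nat.add_sub_cancel, div_eq_div_iff hpos.ne' (by positivity),
    mul_comm _ ((N + 1).choose r : ℝ), ← Nat.cast_sub hrm.le]
  exact_mod_cast Nat.choose_mul_succ_eq N r

theorem cast_choose_pred_pred_div_cast_choose {m r : ℕ} (hr : 0 < r) (hrm : r ≤ m) :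
    ((m - 1).choose (r - 1) : ℝ) / m.choose r = r / m := by
  obtain ⟨N, rfl⟩ : ∃ N, m = N + 1 := ⟨m - 1, by omega⟩
  obtain ⟨R, rfl⟩ : ∃ R, r = R + 1 := ⟨r - 1, by omega⟩
  have hpos : (0 : ℝ) < (N + 1).choose (R + 1) := by exact_mod_cast Nat.choose_pos hrm
  rw [Nat.add_sub_cancel, Nat.add_sub_cancel, div_eq_div_iff hpos.ne' (by positivity), mul_comm,
    mul_comm ((R + 1 : ℕ) : ℝ)]
  exact_mod_cast Nat.add_one_mul_choose_eq N R

theorem vVec_eq_signedIndicator (n k j : ℕ) :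
    vVec n k j = signedIndicator (fun x : SetFamily n k => sgn n j x.1)
      (fun x => IsCompatible n j x.1) (2 ^ j * ((n - 2 * j).choose (k - j) : ℝ)) := rfl

theorem wOut_eq_signedIndicator (n k j : ℕ) :
    wOut n k j = signedIndicator (fun x : SetFamily n k => sgn n j x.1)
      (fun x => IsCompatible n j x.1 ∧ n - 2 * j ∉ x.1)
      (2 ^ j * ((n - 2 * j - 1).choose (k - j) : ℝ)) := rfl

theorem wIn_eq_signedIndicator (n k j : ℕ) :
    wIn n k j = signedIndicator (fun x : SetFamily n k => sgn n j x.1)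
      (fun x => IsCompatible n j x.1 ∧ n - 2 * j ∈ x.1)
      (2 ^ j * ((n - 2 * j - 1).choose (k - j - 1) : ℝ)) := rfl

theorem norm_wOut {n k j : ℕ} (hjk : j ≤ k) (hkn : k + j < n) : ‖wOut n k j‖ = 1 := by
  rw [wOut_eq_signedIndicator]
  have hC : (0 : ℝ) < (n - 2 * j - 1).choose (k - j) := by
    exact_mod_cast Nat.choose_pos (by omega)
  refine norm_signedIndicator (fun x _ => sgn_sq n j x.1) ?_ (by positivity)
  have h := card_filter_univ_subtype (powersetCard k (Icc 1 n))
    fun s => IsCompatible n j s ∧ n - 2 * j ∉ s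
  rw [card_filter_isCompatible_notMem n k j hjk (by omega)] at h
  exact_mod_cast h

theorem norm_wIn {n k j : ℕ} (hjk : j < k) (hkn : k + j ≤ n) : ‖wIn n k j‖ = 1 := by
  rw [wIn_eq_signedIndicator]
  have hC : (0 : ℝ) < (n - 2 * j - 1).choose (k - j - 1) := by
    exact_mod_cast Nat.choose_pos (by omega)
  refine norm_signedIndicator (fun x _ => sgn_sq n j x.1) ?_ (by positivity)
  have h := card_filter_univ_subtype (powersetCard k (Icc 1 n))
    fun s => IsCompatible n j s ∧ n - 2 * j ∈ s
  rw [card_filter_isCompatible_mem n k j hjk (by omega)] at h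
  exact_mod_cast h

theorem inner_wOut_wIn (n k j : ℕ) : ⟪wOut n k j, wIn n k j⟫ = 0 :=
  inner_signedIndicator_eq_zero fun _ h h' => h.2 h'.2

theorem vVec_eq_sqrt_smul_add_sqrt_smul {n k j : ℕ} (hjk : j < k) (hkn : k + j < n) :
    vVec n k j = √(((n : ℝ) - k - j) / (n - 2 * j)) • wOut n k j
      + √(((k : ℝ) - j) / (n - 2 * j)) • wIn n k j := by
  have hm : ((n - 2 * j : ℕ) : ℝ) = n - 2 * j := by rw [Nat.cast_sub (by omega)]; push_cast; ring
  have hr : ((k - j : ℕ) : ℝ) = k - j := Nat.cast_sub hjk.le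
  have hC₀ : (0 : ℝ) < (n - 2 * j).choose (k - j) := by exact_mod_cast Nat.choose_pos (by omega)
  have hC₁ : (0 : ℝ) < (n - 2 * j - 1).choose (k - j) := by
    exact_mod_cast Nat.choose_pos (by omega)
  have hC₂ : (0 : ℝ) < (n - 2 * j - 1).choose (k - j - 1) := by
    exact_mod_cast Nat.choose_pos (by omega)
  have hcoeffOut : ((n : ℝ) - k - j) / (n - 2 * j) =
      2 ^ j * ((n - 2 * j - 1).choose (k - j) : ℝ) / (2 ^ j * (n - 2 * j).choose (k - j)) := by
    rw [mul_div_mul_left _ _ (by positivity), cast_choose_pred_div_cast_choose (by omega), hm, hr]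
    ring
  have hcoeffIn : ((k : ℝ) - j) / (n - 2 * j) =
      2 ^ j * ((n - 2 * j - 1).choose (k - j - 1) : ℝ) / (2 ^ j * (n - 2 * j).choose (k - j)) := by
    rw [mul_div_mul_left _ _ (by positivity),
      cast_choose_pred_pred_div_cast_choose (by omega) (by omega), hm, hr]
  rw [hcoeffOut, hcoeffIn, vVec_eq_signedIndicator, wOut_eq_signedIndicator,
    wIn_eq_signedIndicator]
  exact signedIndicator_eq_sqrt_smul_add_sqrt_smul
    (fun _ => by rw [← and_or_left]; exact (and_iff_left (em' _)).symm) (fun _ h h' => h.2 h'.2)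
    (by positivity) (by positivity)

/-- `w_∘` and `w_•` are orthonormal, `v` is a unit vector, and
`v = sqrt((n−k−j)/(n−2j))·w_∘ + sqrt((k−j)/(n−2j))·w_•`. -/
theorem v_decomposition (n k j : ℕ) (hk : 1 ≤ k) (hj : j ≤ k - 1) (hn : 2 * k + 1 ≤ n) :
    ‖wOut n k j‖ = 1 ∧ ‖wIn n k j‖ = 1 ∧ ⟪wOut n k j, wIn n k j⟫ = 0 ∧
    ‖vVec n k j‖ = 1 ∧
    vVec n k j
      = Real.sqrt (((n : ℝ) - k - j) / ((n : ℝ) - 2 * j)) • wOut n k j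
        + Real.sqrt (((k : ℝ) - j) / ((n : ℝ) - 2 * j)) • wIn n k j := by
  have hjk : j < k := by omega
  have hkn : k + j < n := by omega
  have hOut := norm_wOut hjk.le hkn
  have hIn := norm_wIn hjk hkn.le
  have hDecomp := vVec_eq_sqrt_smul_add_sqrt_smul hjk hkn
  refine ⟨hOut, hIn, inner_wOut_wIn n k j, ?_, hDecomp⟩
  have hjk' : (j : ℝ) < k := by exact_mod_cast hjk
  have hkn' : (k : ℝ) + j < n := by exact_mod_cast hkn
  rw [hDecomp]
  refine norm_sqrt_smul_add_sqrt_smul hOut hIn (inner_wOut_wIn n k j) ?_ ?_ ?_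
  · exact div_nonneg (by linarith) (by linarith)
  · exact div_nonneg (by linarith) (by linarith)
  · rw [← add_div, div_eq_one_iff_eq (by linarith)]
    ring
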